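/- (Iteration complexity) Let P : ℝⁿ → ℝᵐ be continuously differentiable, u⁰ ∈ ℝⁿ, s = ‖P(u⁰)‖_∞ > 0, and let μ, L > 0 and ρ > 0 satisfy: ‖P'(u)ᵀh‖_∞ ≥ μ‖h‖₁ for all h ∈ ℝᵐ and all u ∈ B_ρ = {u : ‖u − u⁰‖₁ ≤ ρ}; ‖(P'(a) − P'(b))v‖_∞ ≤ L‖a−b‖₁‖v‖₁ for all a, b ∈ B_ρ, v ∈ ℝⁿ; and ρ ≥ (μ/L)·(k_max + 2H₀(v̄/2)), where k_max = max{0, ⌈2Ls/μ²⌉ − 2} and v̄ = Ls/μ² − k_max/2; assume in addition v̄ < 1 and 0 < ε < μ²v̄/L. Then every damped sparse-Newton sequence (uᵏ) from u⁰ achieves ‖P(uᵏ)‖_∞ ≤ ε for all k ≥ K_ε, where K_ε = k_max + ⌈log₂(log_{v̄/2}(εL/(2μ²)))⌉. -/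

import Mathlib

/-!
By Hahn–Banach, the lower bound on `P'(u)ᵀ` says exactly that `P'(u) w = P(u)` has a solution
with `μ ‖w‖₁ ≤ ‖P(u)‖_∞`, so the `ℓ¹`-minimal Newton direction obeys this bound. Together with the
second-order Taylor estimate coming from the Lipschitz bound on `P'`, one damped step maps the
normalized residual `q = L ‖P(u)‖_∞ / μ²` to at most `ψ(q)`, where `ψ(q) = q - 1/2` for `q ≥ 1`
and `ψ(q) = q² / 2` for `q ≤ 1`. Since `ψ` is monotone, `q_k` stays below the orbit of
`q₀ = L s / μ²`: `k_max` steps of linear decrease down to `v̄`, then `2 (v̄/2)^(2^(k - k_max))`.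
The `k`-th step has `ℓ¹`-length at most `(μ / L) min(q_k, 1)`, and these sum to at most
`(μ / L) (k_max + 2 H₀(v̄/2)) ≤ ρ`, so the iterates never leave `B_ρ`, where the hypotheses hold.
-/

open Filter Topology

/-- The ℓ1-norm on `ℝ^d`: `‖x‖₁ = Σᵢ |xᵢ|`. -/
noncomputable def l1Norm {d : ℕ} (x : Fin d → ℝ) : ℝ := ∑ i, |x i|

/-- The ℓ∞-norm on `ℝ^d`: `‖x‖_∞ = maxᵢ |xᵢ|`. -/
noncomputable def linfNorm {d : ℕ} (x : Fin d → ℝ) : ℝ := ⨆ i, |x i|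

/-- `H₀(δ) = Σ_{ℓ=0}^∞ δ^(2^ℓ)`. -/
noncomputable def H0 (δ : ℝ) : ℝ := ∑' ℓ : ℕ, δ ^ (2 ^ ℓ)

/-- The transpose of a continuous linear map `A : ℝⁿ → ℝᵐ` applied to `h ∈ ℝᵐ`:
`(Aᵀ h)ᵢ = Σⱼ Aⱼᵢ hⱼ` where `Aⱼᵢ = (A eᵢ)ⱼ`. -/
noncomputable def transposeApply {n m : ℕ} (A : (Fin n → ℝ) →L[ℝ] (Fin m → ℝ))
    (h : Fin m → ℝ) : Fin n → ℝ :=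
  fun i => ∑ j, A (Pi.single i 1) j * h j

lemma l1Norm_eq_norm {d : ℕ} (x : Fin d → ℝ) : l1Norm x = ‖WithLp.toLp 1 x‖ := by
  simp [l1Norm, PiLp.norm_eq_of_L1]

lemma abs_le_linfNorm {d : ℕ} (x : Fin d → ℝ) (i : Fin d) : |x i| ≤ linfNorm x :=
  le_ciSup (f := fun i => |x i|) (Set.finite_range _).bddAbove i

lemma linfNorm_eq_norm {d : ℕ} (x : Fin d → ℝ) : linfNorm x = ‖x‖ := by
  refine le_antisymm (Real.iSup_le (fun i => norm_le_pi_norm x i) (norm_nonneg x)) ?_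
  exact (pi_norm_le_iff_of_nonneg (Real.iSup_nonneg fun _ => abs_nonneg _)).2
    (abs_le_linfNorm x)

lemma linfNorm_nonneg {d : ℕ} (x : Fin d → ℝ) : 0 ≤ linfNorm x := by
  rw [linfNorm_eq_norm]; positivity

lemma l1Norm_nonneg {d : ℕ} (x : Fin d → ℝ) : 0 ≤ l1Norm x := by
  rw [l1Norm_eq_norm]; positivity

lemma l1Norm_add_le {d : ℕ} (x y : Fin d → ℝ) : l1Norm (x + y) ≤ l1Norm x + l1Norm y := by
  simpa only [l1Norm_eq_norm, WithLp.toLp_add] using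
    norm_add_le (WithLp.toLp 1 x) (WithLp.toLp 1 y)

lemma l1Norm_smul {d : ℕ} (c : ℝ) (x : Fin d → ℝ) : l1Norm (c • x) = |c| * l1Norm x := by
  simp only [l1Norm_eq_norm, WithLp.toLp_smul, norm_smul, Real.norm_eq_abs]

lemma l1Norm_neg {d : ℕ} (x : Fin d → ℝ) : l1Norm (-x) = l1Norm x := by
  simp only [l1Norm_eq_norm, WithLp.toLp_neg, norm_neg]

lemma l1Norm_single {d : ℕ} (i : Fin d) (a : ℝ) : l1Norm (Pi.single i a) = |a| := by
  rw [l1Norm, Finset.sum_eq_single i (fun j _ hj => by simp [hj]) (by simp)]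
  simp

lemma sum_mul_le_l1Norm_mul_linfNorm {d : ℕ} (x y : Fin d → ℝ) :
    ∑ i, x i * y i ≤ l1Norm x * linfNorm y := by
  rw [l1Norm, Finset.sum_mul]
  refine Finset.sum_le_sum fun i _ => ?_
  calc x i * y i ≤ |x i| * |y i| := by rw [← abs_mul]; exact le_abs_self _
    _ ≤ |x i| * linfNorm y := by gcongr; exact abs_le_linfNorm y i

lemma sum_single_mul {d : ℕ} (i : Fin d) (a : ℝ) (x : Fin d → ℝ) :
    ∑ j, (Pi.single i a : Fin d → ℝ) j * x j = a * x i := by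
  simp [Pi.single_apply]

lemma single_eq_smul_single_one {d : ℕ} (i : Fin d) (a : ℝ) :
    (Pi.single i a : Fin d → ℝ) = a • Pi.single i 1 := by
  rw [← Pi.single_smul, smul_eq_mul, mul_one]

lemma mul_linfNorm_le_of_forall_l1Norm_le {d : ℕ} {x : Fin d → ℝ} {t c : ℝ} (ht : 0 ≤ t)
    (h : ∀ v, l1Norm v ≤ t → ∑ i, v i * x i ≤ c) : t * linfNorm x ≤ c := by
  have hc : 0 ≤ c := by simpa [l1Norm, ht] using h 0
  rw [linfNorm, Real.mul_iSup_of_nonneg ht]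
  refine Real.iSup_le (fun i => ?_) hc
  rw [← abs_of_nonneg ht, ← abs_mul, abs_le']
  constructor
  · simpa [l1Norm_single, sum_single_mul, abs_of_nonneg ht] using h (Pi.single i t)
  · simpa [l1Norm_single, sum_single_mul, abs_of_nonneg ht] using h (Pi.single i (-t))

lemma apply_eq_sum_mul_apply_single {d : ℕ} (f : (Fin d → ℝ) →ₗ[ℝ] ℝ) (z : Fin d → ℝ) :
    f z = ∑ j, z j * f (Pi.single j 1) := by
  conv_lhs => rw [← Finset.univ_sum_single z]
  simp [single_eq_smul_single_one _ (z _)]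

lemma sum_apply_mul_eq_sum_mul_transposeApply {n m : ℕ} (A : (Fin n → ℝ) →L[ℝ] (Fin m → ℝ))
    (v : Fin n → ℝ) (h : Fin m → ℝ) :
    ∑ j, A v j * h j = ∑ i, v i * transposeApply A h i := by
  conv_lhs => rw [← Finset.univ_sum_single v]
  simp only [map_sum, Finset.sum_apply, Finset.sum_mul, transposeApply, Finset.mul_sum,
    single_eq_smul_single_one _ (v _), map_smul, Pi.smul_apply, smul_eq_mul]
  rw [Finset.sum_comm]
  exact Finset.sum_congr rfl fun i _ => Finset.sum_congr rfl fun j _ => by ring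

lemma convex_setOf_l1Norm_sub_le {d : ℕ} (c : Fin d → ℝ) (r : ℝ) :
    Convex ℝ {x : Fin d → ℝ | l1Norm (x - c) ≤ r} := by
  intro x hx y hy a b ha hb hab
  have hsplit : a • x + b • y - c = a • (x - c) + b • (y - c) := by
    rw [smul_sub, smul_sub, sub_add_sub_comm, ← add_smul, hab, one_smul]
  calc l1Norm (a • x + b • y - c) ≤ l1Norm (a • (x - c)) + l1Norm (b • (y - c)) :=
        hsplit ▸ l1Norm_add_le _ _
    _ = a * l1Norm (x - c) + b * l1Norm (y - c) := by
        rw [l1Norm_smul, l1Norm_smul, abs_of_nonneg ha, abs_of_nonneg hb]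
    _ ≤ a * r + b * r := by gcongr <;> assumption
    _ = r := by rw [← add_mul, hab, one_mul]

/-- Hahn–Banach separation of `y` from the image of the `ℓ¹`-ball of radius `‖y‖_∞ / μ`. -/
theorem exists_apply_eq_and_mul_l1Norm_le {n m : ℕ} (A : (Fin n → ℝ) →L[ℝ] (Fin m → ℝ))
    {μ : ℝ} (hμ : 0 < μ) (hA : ∀ h : Fin m → ℝ, μ * l1Norm h ≤ linfNorm (transposeApply A h))
    (y : Fin m → ℝ) : ∃ v, A v = y ∧ μ * l1Norm v ≤ linfNorm y := by
  by_contra! hy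
  set t := linfNorm y / μ
  have ht : 0 ≤ t := div_nonneg (linfNorm_nonneg y) hμ.le
  let B := A.comp (PiLp.continuousLinearEquiv 1 ℝ fun _ : Fin n => ℝ).toContinuousLinearMap
  have hyB : y ∉ B '' Metric.closedBall 0 t := by
    rintro ⟨v, hv, hvy⟩
    refine (hy _ hvy).not_ge ?_
    rw [mem_closedBall_zero_iff] at hv
    calc μ * l1Norm v.ofLp = μ * ‖v‖ := by rw [l1Norm_eq_norm, WithLp.toLp_ofLp]
      _ ≤ μ * t := by gcongr
      _ = linfNorm y := mul_div_cancel₀ _ hμ.ne'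
  obtain ⟨f, c, hfB, hcy⟩ := geometric_hahn_banach_closed_point
    ((convex_closedBall 0 t).linear_image B.toLinearMap)
    ((isCompact_closedBall 0 t).image B.continuous).isClosed hyB
  set h : Fin m → ℝ := fun j => f (Pi.single j 1)
  have hf (z : Fin m → ℝ) : f z = ∑ j, z j * h j := apply_eq_sum_mul_apply_single f.toLinearMap z
  have hAh : t * linfNorm (transposeApply A h) ≤ c := by
    refine mul_linfNorm_le_of_forall_l1Norm_le ht fun v hv => ?_
    rw [← sum_apply_mul_eq_sum_mul_transposeApply, ← hf]
    refine (hfB _ ⟨WithLp.toLp 1 v, ?_, rfl⟩).le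
    rwa [mem_closedBall_zero_iff, ← l1Norm_eq_norm]
  have : f y ≤ c := calc
    f y = ∑ j, h j * y j := by simp only [hf, mul_comm]
    _ ≤ l1Norm h * linfNorm y := sum_mul_le_l1Norm_mul_linfNorm h y
    _ = t * (μ * l1Norm h) := by simp only [t]; field_simp
    _ ≤ t * linfNorm (transposeApply A h) := by gcongr; exact hA h
    _ ≤ c := hAh
  exact this.not_gt hcy

open Set in
theorem norm_sub_sub_fderiv_le_of_norm_fderiv_sub_le {E F : Type*} [NormedAddCommGroup E]
    [NormedSpace ℝ E] [NormedAddCommGroup F] [NormedSpace ℝ F] {f : E → F} {a d : E} {C : ℝ}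
    (hf : ∀ t ∈ Icc (0 : ℝ) 1, DifferentiableAt ℝ f (a + t • d))
    (hC : ∀ t ∈ Ico (0 : ℝ) 1, ‖fderiv ℝ f (a + t • d) d - fderiv ℝ f a d‖ ≤ C * t) :
    ‖f (a + d) - f a - fderiv ℝ f a d‖ ≤ C / 2 := by
  let g : ℝ → F := fun t => f (a + t • d) - f a - t • fderiv ℝ f a d
  have hg (t : ℝ) (ht : t ∈ Icc (0 : ℝ) 1) :
      HasDerivAt g (fderiv ℝ f (a + t • d) d - fderiv ℝ f a d) t := by
    have hline : HasDerivAt (fun t : ℝ => a + t • d) d t := by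
      simpa using ((hasDerivAt_id t).smul_const d).const_add a
    exact (((hf t ht).hasFDerivAt.comp_hasDerivAt t hline).sub_const (f a)).sub
      (by simpa using (hasDerivAt_id t).smul_const (fderiv ℝ f a d))
  have hB (t : ℝ) : HasDerivAt (fun t : ℝ => C * t ^ 2 / 2) (C * t) t := by
    refine (((hasDerivAt_pow 2 t).const_mul C).div_const 2).congr_deriv ?_
    norm_num; ring
  have := image_norm_le_of_norm_deriv_right_le_deriv_boundary
    (fun t ht => (hg t ht).continuousAt.continuousWithinAt)
    (fun t ht => (hg t (Ico_subset_Icc_self ht)).hasDerivWithinAt) (by simp [g]) hB hC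
    (right_mem_Icc.2 zero_le_one)
  simpa [g] using this

theorem linfNorm_apply_sub_smul_le {n m : ℕ} {P : (Fin n → ℝ) → (Fin m → ℝ)}
    (hP : Differentiable ℝ P) {S : Set (Fin n → ℝ)} (hS : Convex ℝ S) {L : ℝ}
    (hLip : ∀ a ∈ S, ∀ b ∈ S, ∀ v : Fin n → ℝ,
      linfNorm ((fderiv ℝ P a - fderiv ℝ P b) v) ≤ L * l1Norm (a - b) * l1Norm v)
    {u w : Fin n → ℝ} {γ : ℝ} (hu : u ∈ S) (hu' : u - γ • w ∈ S)
    (hw : fderiv ℝ P u w = P u) :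
    linfNorm (P (u - γ • w)) ≤ |1 - γ| * linfNorm (P u) + L / 2 * l1Norm (γ • w) ^ 2 := by
  set d := u - γ • w - u
  have hd : d = -(γ • w) := sub_sub_cancel_left u _
  have hseg (t : ℝ) (ht : t ∈ Set.Icc (0 : ℝ) 1) : u + t • d ∈ S := hS.add_smul_sub_mem hu hu' ht
  have htaylor : ‖P (u + d) - P u - fderiv ℝ P u d‖ ≤ L * l1Norm d ^ 2 / 2 := by
    refine norm_sub_sub_fderiv_le_of_norm_fderiv_sub_le (fun t _ => hP _) fun t ht => ?_
    have := hLip _ (hseg t (Set.Ico_subset_Icc_self ht)) u hu d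
    rw [add_sub_cancel_left, l1Norm_smul, abs_of_nonneg ht.1] at this
    rw [← linfNorm_eq_norm, ← sub_apply]
    linarith
  have hsplit : P (u - γ • w) = (1 - γ) • P u + (P (u + d) - P u - fderiv ℝ P u d) := by
    rw [add_sub_cancel, hd, map_neg, map_smul, hw]
    module
  rw [hsplit, linfNorm_eq_norm, linfNorm_eq_norm, ← l1Norm_neg, ← hd]
  calc _ ≤ ‖(1 - γ) • P u‖ + ‖P (u + d) - P u - fderiv ℝ P u d‖ := norm_add_le _ _
    _ ≤ _ := by rw [norm_smul, Real.norm_eq_abs]; linarith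

lemma summable_pow_two_pow {δ : ℝ} (hδ0 : 0 ≤ δ) (hδ1 : δ < 1) :
    Summable fun ℓ : ℕ => δ ^ 2 ^ ℓ :=
  (summable_geometric_of_lt_one hδ0 hδ1).of_nonneg_of_le (fun _ => by positivity)
    fun ℓ => pow_le_pow_of_le_one hδ0 hδ1.le Nat.lt_two_pow_self.le

open Real in
lemma pow_two_pow_le_of_logb_logb_le {δ x : ℝ} {N : ℕ} (hδ0 : 0 < δ) (hδ1 : δ < 1) (hx : 0 < x)
    (hlog : 0 < logb δ x) (hN : logb 2 (logb δ x) ≤ N) : δ ^ 2 ^ N ≤ x := by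
  rw [← rpow_natCast, ← logb_le_iff_le_rpow_of_base_lt_one hδ0 hδ1 hx, Nat.cast_pow,
    Nat.cast_ofNat, ← rpow_natCast, ← logb_le_iff_le_rpow one_lt_two hlog]
  exact hN

/-- In units of `μ² / L`, the residual after one damped sparse-Newton step is at most
`dampedNewtonMap` of the residual before it. -/
noncomputable def dampedNewtonMap (q : ℝ) : ℝ := q - min q 1 + min q 1 ^ 2 / 2

lemma dampedNewtonMap_of_le_one {q : ℝ} (hq : q ≤ 1) : dampedNewtonMap q = q ^ 2 / 2 := by
  simp [dampedNewtonMap, min_eq_left hq]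

lemma dampedNewtonMap_of_one_le {q : ℝ} (hq : 1 ≤ q) : dampedNewtonMap q = q - 1 / 2 := by
  simp only [dampedNewtonMap, min_eq_right hq]; ring

lemma dampedNewtonMap_monotoneOn : MonotoneOn dampedNewtonMap (Set.Ici 0) := by
  intro a ha b _ hab
  rcases le_total b 1 with hb | hb
  · rw [dampedNewtonMap_of_le_one hb, dampedNewtonMap_of_le_one (hab.trans hb)]
    have : (0 : ℝ) ≤ a := ha
    gcongr
  · rw [dampedNewtonMap_of_one_le hb]
    rcases le_total a 1 with ha1 | ha1
    · rw [dampedNewtonMap_of_le_one ha1]; nlinarith [Set.mem_Ici.1 ha]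
    · rw [dampedNewtonMap_of_one_le ha1]; linarith

section DampedNewton

variable {m : ℕ} {μ L : ℝ}

lemma damping_mem_Icc {x : Fin m → ℝ} {γ : ℝ} (hL : 0 < L)
    (hγ : γ = if x = 0 then 1 else min 1 (μ ^ 2 / (L * linfNorm x))) : γ ∈ Set.Icc 0 1 := by
  subst hγ
  split_ifs
  · simp
  · exact ⟨le_min zero_le_one
      (div_nonneg (sq_nonneg μ) (mul_nonneg hL.le (linfNorm_nonneg x))), min_le_left _ _⟩

lemma damping_mul_linfNorm {x : Fin m → ℝ} {γ : ℝ} (hL : 0 < L)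
    (hγ : γ = if x = 0 then 1 else min 1 (μ ^ 2 / (L * linfNorm x))) :
    γ * linfNorm x = min (linfNorm x) (μ ^ 2 / L) := by
  subst hγ
  rw [linfNorm_eq_norm]
  split_ifs with hx
  · simp [hx]; positivity
  · have hx : 0 < ‖x‖ := norm_pos_iff.2 hx
    rw [min_mul_of_nonneg _ _ hx.le, one_mul]
    field_simp

lemma mul_l1Norm_le_of_damping {r ℓ γ : ℝ} (hμ : 0 < μ) (hγ : γ ∈ Set.Icc 0 1)
    (hγr : γ * r = min r (μ ^ 2 / L)) (hℓ : μ * ℓ ≤ r) : γ * ℓ ≤ min r (μ ^ 2 / L) / μ := by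
  rw [← hγr, le_div_iff₀ hμ]
  nlinarith [hγ.1]

lemma dampedNewton_residual_le {r ℓ γ : ℝ} (hμ : 0 < μ) (hL : 0 < L)
    (hγ : γ ∈ Set.Icc 0 1) (hγr : γ * r = min r (μ ^ 2 / L)) (hℓ0 : 0 ≤ ℓ) (hℓ : μ * ℓ ≤ r) :
    |1 - γ| * r + L / 2 * (γ * ℓ) ^ 2 ≤ μ ^ 2 / L * dampedNewtonMap (L * r / μ ^ 2) := by
  set τ := μ ^ 2 / L
  have hrq : r = τ * (L * r / μ ^ 2) := by simp only [τ]; field_simp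
  have hmin : min r τ = τ * min (L * r / μ ^ 2) 1 := by
    rw [mul_min_of_nonneg _ _ (by positivity), mul_one, ← hrq]
  have hstep := mul_l1Norm_le_of_damping hμ hγ hγr hℓ
  have hγℓ : 0 ≤ γ * ℓ := mul_nonneg hγ.1 hℓ0
  calc |1 - γ| * r + L / 2 * (γ * ℓ) ^ 2 ≤ (r - min r τ) + L / 2 * (min r τ / μ) ^ 2 := by
        rw [abs_of_nonneg (sub_nonneg.2 hγ.2), sub_mul, one_mul, hγr]
        gcongr
    _ = τ * dampedNewtonMap (L * r / μ ^ 2) := by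
        rw [hmin, dampedNewtonMap]
        nth_rewrite 1 [hrq]
        simp only [τ]
        field_simp

end DampedNewton

/-- The orbit of `v + K / 2` under `dampedNewtonMap`, when `0 ≤ v ≤ 1` and `1/2 ≤ v` if `0 < K`. -/
noncomputable def newtonEnvelope (v : ℝ) (K k : ℕ) : ℝ :=
  if k < K then v + ((K : ℝ) - k) / 2 else 2 * (v / 2) ^ 2 ^ (k - K)

lemma newtonEnvelope_zero (v : ℝ) (K : ℕ) : newtonEnvelope v K 0 = v + K / 2 := by
  rcases Nat.eq_zero_or_pos K with rfl | hK
  · simp [newtonEnvelope]; ring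
  · simp [newtonEnvelope, hK]

lemma newtonEnvelope_of_le {v : ℝ} {K k : ℕ} (hk : K ≤ k) :
    newtonEnvelope v K k = 2 * (v / 2) ^ 2 ^ (k - K) := by
  simp [newtonEnvelope, not_lt.2 hk]

section Envelope

variable {v : ℝ} {K : ℕ}

lemma newtonEnvelope_nonneg (hv : 0 ≤ v) (k : ℕ) : 0 ≤ newtonEnvelope v K k := by
  unfold newtonEnvelope
  split_ifs with hk
  · have : (k : ℝ) ≤ K := by exact_mod_cast hk.le
    linarith
  · positivity

lemma newtonEnvelope_le_one_of_le (hv0 : 0 ≤ v) (hv1 : v ≤ 1) {k : ℕ} (hk : K ≤ k) :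
    newtonEnvelope v K k ≤ 1 := by
  rw [newtonEnvelope_of_le hk]
  have : (v / 2) ^ 2 ^ (k - K) ≤ v / 2 :=
    pow_le_of_le_one (by positivity) (by linarith) (by positivity)
  linarith

lemma dampedNewtonMap_newtonEnvelope (hv0 : 0 ≤ v) (hv1 : v ≤ 1) (hK : 0 < K → 1 / 2 ≤ v)
    (k : ℕ) : dampedNewtonMap (newtonEnvelope v K k) = newtonEnvelope v K (k + 1) := by
  rcases lt_or_ge k K with hk | hk
  · have hk' : ((k : ℝ) + 1) ≤ K := by exact_mod_cast hk
    rw [dampedNewtonMap_of_one_le]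
    · rcases (Nat.succ_le_of_lt hk).lt_or_eq with hk1 | hk1
      · simp only [newtonEnvelope, hk, hk1, if_true]; push_cast; ring
      · subst hk1
        simp [newtonEnvelope]; ring
    · simp only [newtonEnvelope, hk, if_true]
      linarith [hK (by omega)]
  · rw [dampedNewtonMap_of_le_one (newtonEnvelope_le_one_of_le hv0 hv1 hk),
      newtonEnvelope_of_le hk, newtonEnvelope_of_le (by omega), Nat.sub_add_comm hk,
      pow_succ 2 (k - K), pow_mul]
    ring

lemma sum_min_newtonEnvelope_le (hv0 : 0 ≤ v) (hv1 : v < 2) (k : ℕ) :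
    ∑ j ∈ Finset.range k, min (newtonEnvelope v K j) 1 ≤ K + 2 * H0 (v / 2) := by
  have hterm (j : ℕ) : 0 ≤ min (newtonEnvelope v K j) 1 :=
    le_min (newtonEnvelope_nonneg hv0 j) zero_le_one
  calc ∑ j ∈ Finset.range k, min (newtonEnvelope v K j) 1
      ≤ ∑ j ∈ Finset.range (K + k), min (newtonEnvelope v K j) 1 :=
        Finset.sum_le_sum_of_subset_of_nonneg (Finset.range_mono (by omega)) fun j _ _ => hterm j
    _ = ∑ j ∈ Finset.range K, min (newtonEnvelope v K j) 1
        + ∑ ℓ ∈ Finset.range k, min (newtonEnvelope v K (K + ℓ)) 1 := Finset.sum_range_add ..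
    _ ≤ ∑ j ∈ Finset.range K, 1 + ∑ ℓ ∈ Finset.range k, 2 * (v / 2) ^ 2 ^ ℓ := by
        gcongr with j _ ℓ
        · exact min_le_right _ _
        · simp [newtonEnvelope_of_le]
    _ ≤ K + 2 * H0 (v / 2) := by
        rw [← Finset.mul_sum, H0]
        simp only [Finset.sum_const, Finset.card_range, nsmul_eq_mul, mul_one]
        gcongr
        exact (summable_pow_two_pow (by positivity) (by linarith)).sum_le_tsum _
          fun _ _ => by positivity

open Real in
lemma newtonEnvelope_le_of_ceil_logb_le {v x : ℝ} {K k : ℕ} (hv0 : 0 < v) (hv1 : v < 1)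
    (hx : 0 < x) (hxv : x < v / 2) (hk : (K : ℤ) + ⌈logb 2 (logb (v / 2) x)⌉ ≤ k) :
    newtonEnvelope v K k ≤ 2 * x := by
  have hlog : 1 < logb (v / 2) x :=
    (lt_logb_iff_rpow_lt_of_base_lt_one (by positivity) (by linarith) hx).2 (by simpa)
  have hceil : 0 < ⌈logb 2 (logb (v / 2) x)⌉ := Int.ceil_pos.2 (logb_pos one_lt_two hlog)
  have hKk : K ≤ k := by omega
  rw [newtonEnvelope_of_le hKk]
  gcongr
  refine pow_two_pow_le_of_logb_logb_le (by positivity) (by linarith) hx (by linarith) ?_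
  calc logb 2 (logb (v / 2) x) ≤ ⌈logb 2 (logb (v / 2) x)⌉ := Int.le_ceil _
    _ ≤ (k - K : ℕ) := by rw [Nat.cast_sub hKk]; exact_mod_cast (by omega)

end Envelope

structure IsDampedSparseNewton {n m : ℕ} (P : (Fin n → ℝ) → (Fin m → ℝ)) (μ L : ℝ)
    (u w : ℕ → Fin n → ℝ) (γ : ℕ → ℝ) : Prop where
  fderiv_apply_eq : ∀ k, fderiv ℝ P (u k) (w k) = P (u k)
  l1Norm_le : ∀ k v, fderiv ℝ P (u k) v = P (u k) → l1Norm (w k) ≤ l1Norm v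
  damping_eq : ∀ k, γ k = if P (u k) = 0 then 1 else min 1 (μ ^ 2 / (L * linfNorm (P (u k))))
  succ_eq : ∀ k, u (k + 1) = u k - γ k • w k

namespace IsDampedSparseNewton

open Finset

variable {n m : ℕ} {P : (Fin n → ℝ) → (Fin m → ℝ)} {μ L ρ v : ℝ} {K : ℕ}
  {u w : ℕ → Fin n → ℝ} {γ : ℕ → ℝ}

theorem l1Norm_sub_le_and_linfNorm_le (hseq : IsDampedSparseNewton P μ L u w γ)
    (hP : Differentiable ℝ P) (hμ : 0 < μ) (hL : 0 < L)
    (hA : ∀ x ∈ {x | l1Norm (x - u 0) ≤ ρ}, ∀ h : Fin m → ℝ,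
      μ * l1Norm h ≤ linfNorm (transposeApply (fderiv ℝ P x) h))
    (hLip : ∀ a ∈ {x | l1Norm (x - u 0) ≤ ρ}, ∀ b ∈ {x | l1Norm (x - u 0) ≤ ρ},
      ∀ z : Fin n → ℝ, linfNorm ((fderiv ℝ P a - fderiv ℝ P b) z) ≤ L * l1Norm (a - b) * l1Norm z)
    (hv0 : 0 ≤ v) (hv1 : v < 1) (hvK : 0 < K → 1 / 2 ≤ v)
    (hρ : μ / L * (K + 2 * H0 (v / 2)) ≤ ρ)
    (h0 : linfNorm (P (u 0)) ≤ μ ^ 2 / L * newtonEnvelope v K 0) (k : ℕ) :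
    l1Norm (u k - u 0) ≤ μ / L * ∑ j ∈ range k, min (newtonEnvelope v K j) 1 ∧
      linfNorm (P (u k)) ≤ μ ^ 2 / L * newtonEnvelope v K k := by
  have hball (j : ℕ) : μ / L * ∑ i ∈ range j, min (newtonEnvelope v K i) 1 ≤ ρ :=
    le_trans (by gcongr; exact sum_min_newtonEnvelope_le hv0 (by linarith) j) hρ
  induction k with
  | zero => simpa [l1Norm] using h0
  | succ k ih =>
    obtain ⟨hdist, hres⟩ := ih
    set r := linfNorm (P (u k))
    have hu : l1Norm (u k - u 0) ≤ ρ := hdist.trans (hball k)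
    have hw : μ * l1Norm (w k) ≤ r := by
      obtain ⟨z, hz, hzr⟩ := exists_apply_eq_and_mul_l1Norm_le _ hμ (hA _ hu) (P (u k))
      exact (mul_le_mul_of_nonneg_left (hseq.l1Norm_le k z hz) hμ.le).trans hzr
    have hγ := damping_mem_Icc hL (hseq.damping_eq k)
    have hγr := damping_mul_linfNorm hL (hseq.damping_eq k)
    have hlen : l1Norm (γ k • w k) ≤ μ / L * min (newtonEnvelope v K k) 1 := by
      rw [l1Norm_smul, abs_of_nonneg hγ.1]
      calc γ k * l1Norm (w k) ≤ min r (μ ^ 2 / L) / μ := mul_l1Norm_le_of_damping hμ hγ hγr hw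
        _ ≤ min (μ ^ 2 / L * newtonEnvelope v K k) (μ ^ 2 / L * 1) / μ := by gcongr; simp
        _ = μ / L * min (newtonEnvelope v K k) 1 := by
          rw [← mul_min_of_nonneg _ _ (by positivity)]; field_simp
    have hdist' : l1Norm (u (k + 1) - u 0) ≤ μ / L * ∑ j ∈ range (k + 1),
        min (newtonEnvelope v K j) 1 := by
      rw [sum_range_succ, mul_add, hseq.succ_eq, sub_right_comm, sub_eq_add_neg]
      exact (l1Norm_add_le _ _).trans (add_le_add hdist (by rwa [l1Norm_neg]))
    refine ⟨hdist', ?_⟩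
    calc linfNorm (P (u (k + 1))) ≤ |1 - γ k| * r + L / 2 * l1Norm (γ k • w k) ^ 2 := by
          rw [hseq.succ_eq] at hdist' ⊢
          exact linfNorm_apply_sub_smul_le hP (convex_setOf_l1Norm_sub_le _ _) hLip hu
            (hdist'.trans (hball _)) (hseq.fderiv_apply_eq k)
      _ ≤ μ ^ 2 / L * dampedNewtonMap (L * r / μ ^ 2) := by
          rw [l1Norm_smul, abs_of_nonneg hγ.1]
          exact dampedNewton_residual_le hμ hL hγ hγr (l1Norm_nonneg _) hw
      _ ≤ μ ^ 2 / L * dampedNewtonMap (newtonEnvelope v K k) := by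
          gcongr
          refine dampedNewtonMap_monotoneOn
            (div_nonneg (mul_nonneg hL.le (linfNorm_nonneg _)) (sq_nonneg μ))
            (newtonEnvelope_nonneg hv0 k) ?_
          rw [div_le_iff₀ (by positivity)]
          calc L * r ≤ L * (μ ^ 2 / L * newtonEnvelope v K k) := by gcongr
            _ = _ := by field_simp
      _ = μ ^ 2 / L * newtonEnvelope v K (k + 1) := by
          rw [dampedNewtonMap_newtonEnvelope hv0 hv1.le hvK]

end IsDampedSparseNewton

theorem statement13_general {n m : ℕ} (P : (Fin n → ℝ) → (Fin m → ℝ)) (hP : ContDiff ℝ 1 P)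
    (u0 : Fin n → ℝ) (s : ℝ) (hs : s = linfNorm (P u0))
    (ρ : ℝ) (Bρ : Set (Fin n → ℝ)) (hB : Bρ = {v | l1Norm (v - u0) ≤ ρ})
    (μ : ℝ) (hμ : 0 < μ)
    (hA' : ∀ v ∈ Bρ, ∀ h : Fin m → ℝ,
      μ * l1Norm h ≤ linfNorm (transposeApply (fderiv ℝ P v) h))
    (L : ℝ) (hL : 0 < L)
    (hLip : ∀ a ∈ Bρ, ∀ b ∈ Bρ, ∀ v : Fin n → ℝ,
      linfNorm ((fderiv ℝ P a - fderiv ℝ P b) v) ≤ L * l1Norm (a - b) * l1Norm v)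
    (kmax : ℤ) (hkmax : kmax = max 0 (⌈2 * (L * s / μ ^ 2)⌉ - 2))
    (vbar : ℝ) (hvbar : vbar = L * s / μ ^ 2 - (kmax : ℝ) / 2)
    (hρbig : ρ ≥ μ / L * ((kmax : ℝ) + 2 * H0 (vbar / 2)))
    (hvbar1 : vbar < 1) (ε : ℝ) (hε : 0 < ε) (hεsmall : ε < μ ^ 2 * vbar / L)
    (Kε : ℤ)
    (hKε : Kε = kmax + ⌈Real.logb 2 (Real.logb (vbar / 2) (ε * L / (2 * μ ^ 2)))⌉)
    -- a damped sparse-Newton sequence from `u0`: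
    (u w : ℕ → Fin n → ℝ) (γ : ℕ → ℝ) (hu0 : u 0 = u0)
    (hw_eq : ∀ k, fderiv ℝ P (u k) (w k) = P (u k))
    (hw_min : ∀ k, ∀ v : Fin n → ℝ, fderiv ℝ P (u k) v = P (u k) →
      l1Norm (w k) ≤ l1Norm v)
    (hγ : ∀ k, γ k = if P (u k) = 0 then 1
      else min 1 (μ ^ 2 / (L * linfNorm (P (u k)))))
    (hstep : ∀ k, u (k + 1) = u k - γ k • w k) :
    ∀ k : ℕ, Kε ≤ (k : ℤ) → linfNorm (P (u k)) ≤ ε := by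
  subst hB hu0
  set K := kmax.toNat
  have hK : (K : ℝ) = kmax := by exact_mod_cast Int.toNat_of_nonneg (hkmax ▸ le_max_left _ _)
  have hv0 : 0 < vbar :=
    pos_of_mul_pos_right ((div_pos_iff_of_pos_right hL).1 (hε.trans hεsmall)) (sq_nonneg μ)
  have hvK (hKpos : 0 < K) : 1 / 2 ≤ vbar := by
    have hceil : (kmax : ℝ) = ⌈2 * (L * s / μ ^ 2)⌉ - 2 := by
      exact_mod_cast (show kmax = ⌈2 * (L * s / μ ^ 2)⌉ - 2 by omega)
    linarith [Int.ceil_lt_add_one (2 * (L * s / μ ^ 2))]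
  have h0 : linfNorm (P (u 0)) ≤ μ ^ 2 / L * newtonEnvelope vbar K 0 := by
    rw [newtonEnvelope_zero, hK, hvbar, ← hs]
    field_simp; linarith
  have hseq : IsDampedSparseNewton P μ L u w γ := ⟨hw_eq, hw_min, hγ, hstep⟩
  intro k hk
  have hx : ε * L / (2 * μ ^ 2) < vbar / 2 := by
    rw [div_lt_div_iff₀ (by positivity) two_pos]
    rw [lt_div_iff₀ hL] at hεsmall
    linarith
  calc linfNorm (P (u k)) ≤ μ ^ 2 / L * newtonEnvelope vbar K k :=
        (hseq.l1Norm_sub_le_and_linfNorm_le (hP.differentiable one_ne_zero) hμ hL hA' hLip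
          hv0.le hvbar1 hvK (by rw [hK]; linarith) h0 k).2
    _ ≤ μ ^ 2 / L * (2 * (ε * L / (2 * μ ^ 2))) := by
      gcongr
      exact newtonEnvelope_le_of_ceil_logb_le hv0 hvbar1 (by positivity) hx (by omega)
    _ = ε := by field_simp

/-- iteration complexity: under the hypotheses guaranteeing
convergence of the damped sparse-Newton method, together with `v̄ < 1` and
`0 < ε < μ²v̄/L`, every damped sparse-Newton sequence from `u⁰` achieves
`‖P(uᵏ)‖_∞ ≤ ε` for all `k ≥ K_ε`, where
`K_ε = k_max + ⌈log₂(log_{v̄/2}(εL/(2μ²)))⌉`. -/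
theorem statement13 {n m : ℕ} (P : (Fin n → ℝ) → (Fin m → ℝ)) (hP : ContDiff ℝ 1 P)
    (u0 : Fin n → ℝ) (s : ℝ) (hs : s = linfNorm (P u0)) (hspos : 0 < s)
    (ρ : ℝ) (hρ : 0 < ρ) (Bρ : Set (Fin n → ℝ)) (hB : Bρ = {v | l1Norm (v - u0) ≤ ρ})
    (μ : ℝ) (hμ : 0 < μ)
    (hA' : ∀ v ∈ Bρ, ∀ h : Fin m → ℝ,
      μ * l1Norm h ≤ linfNorm (transposeApply (fderiv ℝ P v) h))
    (L : ℝ) (hL : 0 < L)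
    (hLip : ∀ a ∈ Bρ, ∀ b ∈ Bρ, ∀ v : Fin n → ℝ,
      linfNorm ((fderiv ℝ P a - fderiv ℝ P b) v) ≤ L * l1Norm (a - b) * l1Norm v)
    (kmax : ℤ) (hkmax : kmax = max 0 (⌈2 * (L * s / μ ^ 2)⌉ - 2))
    (vbar : ℝ) (hvbar : vbar = L * s / μ ^ 2 - (kmax : ℝ) / 2)
    (hρbig : ρ ≥ μ / L * ((kmax : ℝ) + 2 * H0 (vbar / 2)))
    (hvbar1 : vbar < 1) (ε : ℝ) (hε : 0 < ε) (hεsmall : ε < μ ^ 2 * vbar / L)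
    (Kε : ℤ)
    (hKε : Kε = kmax + ⌈Real.logb 2 (Real.logb (vbar / 2) (ε * L / (2 * μ ^ 2)))⌉)
    -- a damped sparse-Newton sequence from `u0`:
    (u w : ℕ → Fin n → ℝ) (γ : ℕ → ℝ) (hu0 : u 0 = u0)
    (hw_eq : ∀ k, fderiv ℝ P (u k) (w k) = P (u k))
    (hw_min : ∀ k, ∀ v : Fin n → ℝ, fderiv ℝ P (u k) v = P (u k) →
      l1Norm (w k) ≤ l1Norm v)
    (hγ : ∀ k, γ k = if P (u k) = 0 then 1
      else min 1 (μ ^ 2 / (L * linfNorm (P (u k)))))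
    (hstep : ∀ k, u (k + 1) = u k - γ k • w k) :
    ∀ k : ℕ, Kε ≤ (k : ℤ) → linfNorm (P (u k)) ≤ ε :=
  statement13_general P hP u0 s hs ρ Bρ hB μ hμ hA' L hL hLip kmax hkmax vbar hvbar hρbig hvbar1 ε
    hε hεsmall Kε hKε u w γ hu0 hw_eq hw_min hγ hstep
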